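/- Let K be a compact topological group and let (μ_t)_{t∈ℝ} be a family of continuous finite-dimensional linear representations of K on a fixed finite-dimensional real vector space V, depending continuously on t (i.e., the map ℝ × K → GL(V) is continuous). Then for all real numbers t₁, t₂, the representations μ_{t₁} and μ_{t₂} are conjugate (isomorphic as representations). -/

import Mathlib

/-!
Averaging `ρ k ∘ σ k⁻¹` over the Haar probability measure of `K` produces an operator
intertwining `σ` and `ρ`; when `ρ k ∘ σ k⁻¹` stays uniformly within distance `c < 1` of the
identity, so does the average, which is then invertible. By compactness of `K` this applies to
`μ t` and `μ t₀` for all `t` near `t₀`, so conjugacy classes are open in the parameter line, and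
connectedness of `ℝ` leaves only one class.
-/

open MeasureTheory Measure Filter Topology

section

variable {K V : Type*} [Group K] [NormedAddCommGroup V] [NormedSpace ℝ V]

def AreConjugate (ρ σ : K →* (V ≃L[ℝ] V)) : Prop :=
  ∃ A : V ≃L[ℝ] V, ∀ k v, ρ k (A v) = A (σ k v)

namespace AreConjugate

theorem symm {ρ σ : K →* (V ≃L[ℝ] V)} (h : AreConjugate ρ σ) : AreConjugate σ ρ := by
  obtain ⟨A, hA⟩ := h
  exact ⟨A.symm, fun k v => by rw [ContinuousLinearEquiv.eq_symm_apply, ← hA, A.apply_symm_apply]⟩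

theorem trans {ρ σ τ : K →* (V ≃L[ℝ] V)} (h₁ : AreConjugate ρ σ) (h₂ : AreConjugate σ τ) :
    AreConjugate ρ τ := by
  obtain ⟨A, hA⟩ := h₁
  obtain ⟨B, hB⟩ := h₂
  exact ⟨B.trans A, fun k v => by simp only [ContinuousLinearEquiv.trans_apply, hA, hB]⟩

end AreConjugate

section Averaging

variable [TopologicalSpace K] [IsTopologicalGroup K] [CompactSpace K] [MeasurableSpace K]
  [BorelSpace K] (ν : Measure K) [IsProbabilityMeasure ν] {ρ σ : K →* (V ≃L[ℝ] V)}

theorem integrable_comp_map_inv (hρ : Continuous fun k => (ρ k : V →L[ℝ] V))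
    (hσ : Continuous fun k => (σ k : V →L[ℝ] V)) :
    Integrable (fun k => (ρ k : V →L[ℝ] V).comp (σ k⁻¹ : V →L[ℝ] V)) ν :=
  (hρ.clm_comp (hσ.comp continuous_inv)).integrable_of_hasCompactSupport
    (isClosed_tsupport _).isCompact

variable [CompleteSpace V]

noncomputable def intertwiningAverage (ρ σ : K →* (V ≃L[ℝ] V)) : V →L[ℝ] V :=
  ∫ k, (ρ k : V →L[ℝ] V).comp (σ k⁻¹ : V →L[ℝ] V) ∂ν

theorem comp_intertwiningAverage [IsMulLeftInvariant ν]
    (hρ : Continuous fun k => (ρ k : V →L[ℝ] V)) (hσ : Continuous fun k => (σ k : V →L[ℝ] V))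
    (g : K) :
    (ρ g : V →L[ℝ] V).comp (intertwiningAverage ν ρ σ) =
      (intertwiningAverage ν ρ σ).comp (σ g : V →L[ℝ] V) := by
  have hint := integrable_comp_map_inv ν hρ hσ
  set F : K → V →L[ℝ] V := fun k => (ρ k : V →L[ℝ] V).comp (σ (k⁻¹ * g) : V →L[ℝ] V)
  have hleft : (ρ g : V →L[ℝ] V).comp (intertwiningAverage ν ρ σ) = ∫ k, F (g * k) ∂ν := by
    have := (ContinuousLinearMap.compL ℝ V V V (ρ g : V →L[ℝ] V)).integral_comp_comm hint
    simp only [ContinuousLinearMap.compL_apply] at this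
    rw [intertwiningAverage, ← this]
    congr 1
    ext k v
    have hgk : (g * k)⁻¹ * g = k⁻¹ := by group
    change ρ g (ρ k (σ k⁻¹ v)) = ρ (g * k) (σ ((g * k)⁻¹ * g) v)
    rw [hgk, map_mul]
    rfl
  have hright : (intertwiningAverage ν ρ σ).comp (σ g : V →L[ℝ] V) = ∫ k, F k ∂ν := by
    have := ((ContinuousLinearMap.compL ℝ V V V).flip (σ g : V →L[ℝ] V)).integral_comp_comm hint
    simp only [ContinuousLinearMap.flip_apply, ContinuousLinearMap.compL_apply] at this
    rw [intertwiningAverage, ← this]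
    congr 1
    ext k v
    simp [F, map_mul]
  rw [hleft, hright, integral_mul_left_eq_self F g]

theorem norm_intertwiningAverage_sub_one_le
    (hρ : Continuous fun k => (ρ k : V →L[ℝ] V)) (hσ : Continuous fun k => (σ k : V →L[ℝ] V))
    {c : ℝ} (hc : ∀ k, ‖(ρ k : V →L[ℝ] V).comp (σ k⁻¹ : V →L[ℝ] V) - 1‖ ≤ c) :
    ‖intertwiningAverage ν ρ σ - 1‖ ≤ c := by
  have hsub : intertwiningAverage ν ρ σ - 1 =
      ∫ k, ((ρ k : V →L[ℝ] V).comp (σ k⁻¹ : V →L[ℝ] V) - 1) ∂ν := by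
    rw [integral_sub (integrable_comp_map_inv ν hρ hσ) (integrable_const _), integral_const,
      probReal_univ, one_smul, intertwiningAverage]
  rw [hsub]
  simpa using norm_integral_le_of_norm_le_const (μ := ν) (Eventually.of_forall hc)

end Averaging

theorem areConjugate_of_norm_comp_inv_sub_one_le [TopologicalSpace K] [IsTopologicalGroup K]
    [CompactSpace K] [CompleteSpace V] {ρ σ : K →* (V ≃L[ℝ] V)}
    (hρ : Continuous fun k => (ρ k : V →L[ℝ] V)) (hσ : Continuous fun k => (σ k : V →L[ℝ] V))
    {c : ℝ} (hc1 : c < 1) (hc : ∀ k, ‖(ρ k : V →L[ℝ] V).comp (σ k⁻¹ : V →L[ℝ] V) - 1‖ ≤ c) :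
    AreConjugate ρ σ := by
  borelize K
  have : IsProbabilityMeasure (haarMeasure (⊤ : TopologicalSpace.PositiveCompacts K)) :=
    ⟨by simpa using haarMeasure_self (K₀ := (⊤ : TopologicalSpace.PositiveCompacts K))⟩
  set A := intertwiningAverage (haarMeasure ⊤) ρ σ
  obtain ⟨u, hu⟩ : IsUnit A := by
    simpa using isUnit_one_sub_of_norm_lt_one (x := 1 - A) <| by
      rw [norm_sub_rev]
      exact (norm_intertwiningAverage_sub_one_le _ hρ hσ hc).trans_lt hc1
  refine ⟨ContinuousLinearEquiv.unitsEquiv ℝ V u, fun k v => ?_⟩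
  simpa [hu] using congr($(comp_intertwiningAverage (haarMeasure ⊤) hρ hσ k) v)

theorem eventually_areConjugate [TopologicalSpace K] [IsTopologicalGroup K] [CompactSpace K]
    [CompleteSpace V] {T : Type*} [TopologicalSpace T] (μ : T → K →* (V ≃L[ℝ] V))
    (hcont : Continuous fun p : T × K => (μ p.1 p.2 : V →L[ℝ] V)) (t₀ : T) :
    ∀ᶠ t in 𝓝 t₀, AreConjugate (μ t₀) (μ t) := by
  have hslice : ∀ t, Continuous fun k => (μ t k : V →L[ℝ] V) := fun t =>
    hcont.comp (Continuous.prodMk_right t)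
  have hG : Continuous fun p : T × K =>
      (μ t₀ p.2 : V →L[ℝ] V).comp (μ p.1 p.2⁻¹ : V →L[ℝ] V) - 1 :=
    ((hcont.comp (continuous_const.prodMk continuous_snd)).clm_comp
      (hcont.comp (continuous_fst.prodMk continuous_snd.inv))).sub continuous_const
  have hG₀ : ∀ k, (μ t₀ k : V →L[ℝ] V).comp (μ t₀ k⁻¹ : V →L[ℝ] V) - 1 = 0 := by
    intro k
    ext v
    change μ t₀ k (μ t₀ k⁻¹ v) - v = 0
    rw [map_inv]
    exact sub_eq_zero.2 ((μ t₀ k).apply_symm_apply v)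
  have hsmall : ∀ᶠ t in 𝓝 t₀, ∀ k ∈ Set.univ,
      ‖(μ t₀ k : V →L[ℝ] V).comp (μ t k⁻¹ : V →L[ℝ] V) - 1‖ < 1 / 2 :=
    isCompact_univ.eventually_forall_of_forall_eventually fun k _ =>
      (hG.norm.tendsto (t₀, k)).eventually_lt_const (by simp only [hG₀ k, norm_zero]; norm_num)
  filter_upwards [hsmall] with t ht
  exact areConjugate_of_norm_comp_inv_sub_one_le (hslice t₀) (hslice t) (by norm_num)
    fun k => (ht k trivial).le

theorem areConjugate_of_preconnectedSpace [TopologicalSpace K] [IsTopologicalGroup K]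
    [CompactSpace K] [CompleteSpace V] {T : Type*} [TopologicalSpace T] [PreconnectedSpace T]
    (μ : T → K →* (V ≃L[ℝ] V)) (hcont : Continuous fun p : T × K => (μ p.1 p.2 : V →L[ℝ] V))
    (t₁ t₂ : T) : AreConjugate (μ t₁) (μ t₂) :=
  PreconnectedSpace.induction₂' (fun t s => AreConjugate (μ t) (μ s))
    (fun t₀ => (eventually_areConjugate μ hcont t₀).mono fun _ h => ⟨h, h.symm⟩)
    ⟨fun _ _ _ => AreConjugate.trans⟩ t₁ t₂

end

/-- A continuous family of finite-dimensional real representations of a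
compact group has all members pairwise conjugate. -/
theorem stmt0 {K : Type*} [Group K] [TopologicalSpace K] [IsTopologicalGroup K] [CompactSpace K]
    {V : Type*} [NormedAddCommGroup V] [NormedSpace ℝ V] [FiniteDimensional ℝ V]
    (μ : ℝ → K →* (V ≃L[ℝ] V))
    (hcont : Continuous fun p : ℝ × K => ((μ p.1 p.2 : V →L[ℝ] V))) :
    ∀ t₁ t₂ : ℝ, ∃ A : V ≃L[ℝ] V, ∀ (k : K) (v : V),
      μ t₁ k v = A (μ t₂ k (A.symm v)) := by
  intro t₁ t₂
  have : CompleteSpace V := FiniteDimensional.complete ℝ V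
  obtain ⟨A, hA⟩ := areConjugate_of_preconnectedSpace μ hcont t₁ t₂
  exact ⟨A, fun k v => by simpa using hA k (A.symm v)⟩
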